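/- Under the stated hypotheses, for the parallel hybrid algorithm, for every u ∈ F one has lim_{n→∞} ‖A_{k_n} z̄_n - A_{k_n} u‖ = 0. -/

import Mathlib

/-!
Fix `u ∈ F`. Each stage of an iteration moves no farther from `u`: the resolvent step by the
monotonicity of `f_l`, the projected gradient step because `u = P_C (u - λ A_k u)`, and the Mann
step because `S_i u = u`; inverse strong monotonicity makes the gradient step gain
`λ (2α - λ) ‖A_k z̄_n - A_k u‖²`. So `u ∈ C_n` for all `n`, and by induction `u ∈ Q_n`. As
`x_{n+1}` is the projection of `x_0` onto `C_n ∩ Q_n ⊆ Q_n`, `‖x_n - x_0‖²` increases by at least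
`‖x_{n+1} - x_n‖²` at each step while staying below `‖u - x_0‖²`; hence `x_{n+1} - x_n → 0`, and
`x_n - ȳ_n → 0` because `x_{n+1} ∈ C_n`. Finally
`λ (2α - λ) ‖A_{k_n} z̄_n - A_{k_n} u‖² ≤ ‖x_n - u‖² - ‖ȳ_n - u‖²`, which tends to zero.
-/

open Filter Topology
open scoped RealInnerProductSpace

/-- `p` is the metric projection of `x` onto the set `D`:
it belongs to `D` and minimizes the distance to `x` over `D`. -/
def IsMetricProj {H : Type*} [NormedAddCommGroup H] [InnerProductSpace ℝ H]
    (D : Set H) (x p : H) : Prop :=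
  p ∈ D ∧ ∀ w ∈ D, ‖p - x‖ ≤ ‖w - x‖

section InnerProduct

variable {H : Type*} [NormedAddCommGroup H] [InnerProductSpace ℝ H]

theorem sq_norm_add_sq_le_of_inner_nonneg {a b : H} (h : 0 ≤ ⟪a, b⟫) :
    ‖a‖ ^ 2 + ‖b‖ ^ 2 ≤ ‖a + b‖ ^ 2 := by
  rw [norm_add_sq_real]; linarith

theorem norm_le_norm_add_of_inner_nonneg {a b : H} (h : 0 ≤ ⟪a, b⟫) : ‖a‖ ≤ ‖a + b‖ :=
  (sq_le_sq₀ (norm_nonneg _) (norm_nonneg _)).mp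
    (by nlinarith [sq_norm_add_sq_le_of_inner_nonneg h, sq_nonneg ‖b‖])

theorem sq_norm_sub_smul_add_le {v w : H} {α lam : ℝ} (hlam : 0 ≤ lam)
    (h : α * ‖w‖ ^ 2 ≤ ⟪w, v⟫) :
    ‖v - lam • w‖ ^ 2 + lam * (2 * α - lam) * ‖w‖ ^ 2 ≤ ‖v‖ ^ 2 := by
  rw [norm_sub_sq_real, real_inner_smul_right, norm_smul, mul_pow, Real.norm_eq_abs, sq_abs,
    real_inner_comm]
  nlinarith [mul_le_mul_of_nonneg_left h hlam]

theorem norm_smul_add_one_sub_smul_sub_le {p q u : H} {a : ℝ} (ha : a ∈ Set.Icc (0 : ℝ) 1)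
    (hq : ‖q - u‖ ≤ ‖p - u‖) : ‖a • p + (1 - a) • q - u‖ ≤ ‖p - u‖ := by
  have hmem := convex_closedBall u ‖p - u‖ (x := p) (y := q)
    (by rw [mem_closedBall_iff_norm]) (by rwa [mem_closedBall_iff_norm])
    ha.1 (sub_nonneg.mpr ha.2) (add_sub_cancel a 1)
  rwa [mem_closedBall_iff_norm] at hmem

theorem convex_setOf_inner_le (c : H) (t : ℝ) : Convex ℝ {v : H | ⟪c, v⟫ ≤ t} :=
  convex_halfSpace_le (innerₛₗ ℝ c).isLinear t

theorem convex_setOf_norm_sub_le_norm_sub (a b : H) : Convex ℝ {v : H | ‖v - a‖ ≤ ‖v - b‖} := by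
  convert convex_setOf_inner_le (b - a) ((‖b‖ ^ 2 - ‖a‖ ^ 2) / 2) using 1
  ext v
  rw [Set.mem_ofPred_eq, Set.mem_ofPred_eq, ← sq_le_sq₀ (norm_nonneg _) (norm_nonneg _),
    norm_sub_sq_real, norm_sub_sq_real, inner_sub_left, real_inner_comm v a, real_inner_comm v b]
  constructor <;> intro h <;> linarith

theorem convex_setOf_inner_sub_nonneg (c w : H) : Convex ℝ {v : H | 0 ≤ ⟪c, w - v⟫} := by
  convert convex_setOf_inner_le c ⟪c, w⟫ using 1
  ext v
  rw [Set.mem_ofPred_eq, Set.mem_ofPred_eq, inner_sub_right, sub_nonneg]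

theorem norm_sub_le_of_regularized_equilibrium {C : Set H} {f : H → H → ℝ}
    (hf : ∀ p ∈ C, ∀ q ∈ C, f p q + f q p ≤ 0) {r : ℝ} (hr : 0 < r) {x z u : H}
    (hz : z ∈ C ∧ ∀ q ∈ C, 0 ≤ f z q + (1 / r) * ⟪q - z, z - x⟫)
    (hu : u ∈ C) (hEP : ∀ q ∈ C, 0 ≤ f u q) : ‖z - u‖ ≤ ‖x - u‖ := by
  have hinner : 0 ≤ ⟪u - z, z - x⟫ := by
    refine nonneg_of_mul_nonneg_right ?_ (one_div_pos.mpr hr)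
    linarith [hz.2 u hu, hf z hz.1 u hu, hEP z hz.1]
  simpa [norm_sub_rev] using norm_le_norm_add_of_inner_nonneg hinner

end InnerProduct

namespace IsMetricProj

variable {H : Type*} [NormedAddCommGroup H] [InnerProductSpace ℝ H] {D : Set H} {x p : H}

theorem inner_le_zero (hD : Convex ℝ D) (h : IsMetricProj D x p) {w : H} (hw : w ∈ D) :
    ⟪x - p, w - p⟫ ≤ 0 := by
  have : Nonempty D := ⟨⟨p, h.1⟩⟩
  refine (norm_eq_iInf_iff_real_inner_le_zero hD h.1).mp ?_ w hw
  refine le_antisymm (le_ciInf fun w => ?_)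
    (ciInf_le (f := fun w : D => ‖x - w‖) ⟨0, ?_⟩ ⟨p, h.1⟩)
  · simpa only [norm_sub_rev x] using h.2 w w.2
  · rintro _ ⟨w, rfl⟩
    exact norm_nonneg _

theorem of_inner_le_zero (hp : p ∈ D) (h : ∀ w ∈ D, ⟪x - p, w - p⟫ ≤ 0) :
    IsMetricProj D x p := by
  refine ⟨hp, fun w hw => ?_⟩
  have hinner : 0 ≤ ⟪p - x, w - p⟫ := by
    rw [← neg_sub x p, inner_neg_left]
    linarith [h w hw]
  simpa using norm_le_norm_add_of_inner_nonneg hinner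

theorem norm_sub_le (hD : Convex ℝ D) {y q : H} (hp : IsMetricProj D x p)
    (hq : IsMetricProj D y q) : ‖p - q‖ ≤ ‖x - y‖ := by
  have h₁ := hp.inner_le_zero hD hq.1
  have h₂ := hq.inner_le_zero hD hp.1
  have key : ‖p - q‖ ^ 2 ≤ ⟪x - y, p - q⟫ := by
    have : ⟪x - y, p - q⟫ = ‖p - q‖ ^ 2 - ⟪x - p, q - p⟫ - ⟪y - q, p - q⟫ := by
      rw [← real_inner_self_eq_norm_sq]
      simp only [inner_sub_left, inner_sub_right, real_inner_comm p q]
      ring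
    linarith
  nlinarith [real_inner_le_norm (x - y) (p - q), norm_nonneg (p - q), norm_nonneg (x - y)]

theorem sub_smul_of_forall_inner_nonneg (hp : p ∈ D) {g : H} {lam : ℝ} (hlam : 0 ≤ lam)
    (hg : ∀ w ∈ D, 0 ≤ ⟪g, w - p⟫) : IsMetricProj D (p - lam • g) p :=
  of_inner_le_zero hp fun w hw => by
    rw [sub_sub_cancel_left, inner_neg_left, real_inner_smul_left]
    nlinarith [hg w hw]

theorem sq_norm_sub_add_le (hD : Convex ℝ D) {T : H → H} {α lam : ℝ} {z u : H}
    (hlam : 0 ≤ lam) (hT : α * ‖T z - T u‖ ^ 2 ≤ ⟪T z - T u, z - u⟫)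
    (hp : IsMetricProj D (z - lam • T z) p) (hu : IsMetricProj D (u - lam • T u) u) :
    ‖p - u‖ ^ 2 + lam * (2 * α - lam) * ‖T z - T u‖ ^ 2 ≤ ‖z - u‖ ^ 2 := by
  have hstep : z - lam • T z - (u - lam • T u) = z - u - lam • (T z - T u) := by
    rw [smul_sub]; abel
  have hne := hp.norm_sub_le hD hu
  rw [hstep] at hne
  nlinarith [sq_norm_sub_smul_add_le hlam hT, norm_nonneg (p - u)]

end IsMetricProj

theorem tendsto_nhds_zero_of_sq {α : Type*} {l : Filter α} {e : α → ℝ}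
    (h : Tendsto (fun n => e n ^ 2) l (𝓝 0)) : Tendsto e l (𝓝 0) := by
  rw [tendsto_zero_iff_abs_tendsto_zero]
  simpa [Function.comp_def, Real.sqrt_sq_eq_abs] using h.sqrt

theorem tendsto_nhds_zero_of_add_le_succ {e δ : ℕ → ℝ} (hδ : ∀ n, 0 ≤ δ n)
    (h : ∀ n, e n + δ n ≤ e (n + 1)) (hb : BddAbove (Set.range e)) :
    Tendsto δ atTop (𝓝 0) := by
  have hmono : Monotone e := monotone_nat_of_le_succ fun n => by linarith [hδ n, h n]
  have hlim := tendsto_atTop_ciSup hmono hb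
  have hsucc : Tendsto (fun n => e (n + 1) - e n) atTop (𝓝 0) := by
    simpa using (hlim.comp (tendsto_add_atTop_nat 1)).sub hlim
  exact squeeze_zero hδ (fun n => by linarith [h n]) hsucc

theorem tendsto_nhds_zero_of_mul_sq_add_sq_norm_le {H : Type*} [NormedAddCommGroup H]
    {w v : ℕ → H} {e : ℕ → ℝ} {c R : ℝ} (hc : 0 < c) (hw : ∀ n, ‖w n‖ ≤ R)
    (h : ∀ n, c * e n ^ 2 + ‖v n‖ ^ 2 ≤ ‖w n‖ ^ 2)
    (hwv : Tendsto (fun n => ‖w n - v n‖) atTop (𝓝 0)) : Tendsto e atTop (𝓝 0) := by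
  refine tendsto_nhds_zero_of_sq <| squeeze_zero (fun n => sq_nonneg _) (fun n => ?_)
    (by simpa using hwv.const_mul (2 * R / c))
  have hce : 0 ≤ c * e n ^ 2 := mul_nonneg hc.le (sq_nonneg _)
  have hv : ‖v n‖ ≤ ‖w n‖ := (sq_le_sq₀ (norm_nonneg _) (norm_nonneg _)).mp (by linarith [h n])
  have hsum : ‖w n‖ + ‖v n‖ ≤ 2 * R := by linarith [hw n]
  rw [div_mul_eq_mul_div, le_div_iff₀ hc]
  nlinarith [h n, mul_le_mul_of_nonneg_right (norm_sub_norm_le (w n) (v n))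
    (add_nonneg (norm_nonneg (w n)) (norm_nonneg (v n))),
    mul_le_mul_of_nonneg_left hsum (norm_nonneg (w n - v n))]

def IsHybridProjSeq {H : Type*} [NormedAddCommGroup H] [InnerProductSpace ℝ H]
    (D : ℕ → Set H) (x : ℕ → H) : Prop :=
  ∀ n, IsMetricProj (D n ∩ {v | 0 ≤ ⟪x 0 - x n, x n - v⟫}) (x 0) (x (n + 1))

namespace IsHybridProjSeq

variable {H : Type*} [NormedAddCommGroup H] [InnerProductSpace ℝ H] {D : ℕ → Set H} {x : ℕ → H}
  {u : H}

theorem inner_nonneg (hx : IsHybridProjSeq D x) (hD : ∀ n, Convex ℝ (D n))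
    (hu : ∀ n, u ∈ D n) (n : ℕ) : 0 ≤ ⟪x 0 - x n, x n - u⟫ := by
  induction n with
  | zero => simp
  | succ m ih =>
    have h := (hx m).inner_le_zero ((hD m).inter (convex_setOf_inner_sub_nonneg _ _)) ⟨hu m, ih⟩
    rw [← neg_sub (x (m + 1)) u, inner_neg_right] at h
    linarith

theorem norm_sub_le (hx : IsHybridProjSeq D x) (hD : ∀ n, Convex ℝ (D n))
    (hu : ∀ n, u ∈ D n) : ∀ n, ‖x n - x 0‖ ≤ ‖u - x 0‖
  | 0 => by simp
  | m + 1 => (hx m).2 u ⟨hu m, hx.inner_nonneg hD hu m⟩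

theorem sq_norm_sub_add_le (hx : IsHybridProjSeq D x) (n : ℕ) :
    ‖x n - x 0‖ ^ 2 + ‖x (n + 1) - x n‖ ^ 2 ≤ ‖x (n + 1) - x 0‖ ^ 2 := by
  have hQ : 0 ≤ ⟪x 0 - x n, x n - x (n + 1)⟫ := (hx n).1.2
  rw [← neg_sub (x n), ← neg_sub (x (n + 1)), inner_neg_neg] at hQ
  simpa using sq_norm_add_sq_le_of_inner_nonneg hQ

theorem tendsto_norm_succ_sub (hx : IsHybridProjSeq D x) (hD : ∀ n, Convex ℝ (D n))
    (hu : ∀ n, u ∈ D n) : Tendsto (fun n => ‖x (n + 1) - x n‖) atTop (𝓝 0) := by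
  refine tendsto_nhds_zero_of_sq <|
    tendsto_nhds_zero_of_add_le_succ (fun n => sq_nonneg _) hx.sq_norm_sub_add_le
      ⟨‖u - x 0‖ ^ 2, ?_⟩
  rintro _ ⟨n, rfl⟩
  exact pow_le_pow_left₀ (norm_nonneg _) (hx.norm_sub_le hD hu n) 2

theorem tendsto_norm_sub (hx : IsHybridProjSeq D x) (hD : ∀ n, Convex ℝ (D n))
    (hu : ∀ n, u ∈ D n) {y : ℕ → H} (hy : ∀ n, ∀ v ∈ D n, ‖v - y n‖ ≤ ‖v - x n‖) :
    Tendsto (fun n => ‖x n - y n‖) atTop (𝓝 0) := by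
  refine squeeze_zero (fun n => norm_nonneg _) (fun n => ?_)
    (by simpa using (hx.tendsto_norm_succ_sub hD hu).const_mul 2)
  have hy' := hy n _ (hx n).1.1
  have := norm_sub_le_norm_sub_add_norm_sub (x n) (x (n + 1)) (y n)
  rw [norm_sub_rev (x n) (x (n + 1))] at this
  linarith

end IsHybridProjSeq

theorem operator_values_converge_general
    {H : Type*} [NormedAddCommGroup H] [InnerProductSpace ℝ H]
    -- `C` is a nonempty closed convex subset of `H`
    (C : Set H) (hCcv : Convex ℝ C)
    (K M N : ℕ)
    -- the bifunctions `f_l : C × C → ℝ` satisfy conditions (A1)-(A4)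
    (f : Fin K → H → H → ℝ)
    (hfA2 : ∀ l, ∀ p ∈ C, ∀ q ∈ C, f l p q + f l q p ≤ 0)
    -- the mappings `A_k : C → H` are `α`-inverse strongly monotone
    (α : ℝ) (A : Fin M → H → H)
    (hA : ∀ k, ∀ p ∈ C, ∀ q ∈ C, α * ‖A k p - A k q‖ ^ 2 ≤ ⟪A k p - A k q, p - q⟫)
    -- the mappings `S_i : C → C` are nonexpansive
    (S : Fin N → H → H)
    (hS : ∀ i, ∀ p ∈ C, ∀ q ∈ C, ‖S i p - S i q‖ ≤ ‖p - q‖)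
    -- parameters: `λ ∈ (0, 2α)`, `{α_n} ⊂ [0,1]`, `{r_n} ⊂ [d, ∞)`, `d > 0`
    (lam : ℝ) (hlam : lam ∈ Set.Ioo 0 (2 * α))
    (a : ℕ → ℝ) (ha : ∀ n, a n ∈ Set.Icc (0 : ℝ) 1)
    (d : ℝ) (hd : 0 < d) (r : ℕ → ℝ) (hr : ∀ n, d ≤ r n)
    -- `F = (∩ EP(f_l)) ∩ (∩ F(S_i)) ∩ (∩ VI(A_k, C))` is nonempty
    (F : Set H)
    (hF : F = {p | p ∈ C ∧ (∀ l, ∀ q ∈ C, 0 ≤ f l p q) ∧ (∀ i, S i p = p) ∧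
      (∀ k, ∀ q ∈ C, 0 ≤ ⟪A k p, q - p⟫)})
    -- the parallel hybrid algorithm
    (x : ℕ → H) (z : ℕ → Fin K → H) (uu : ℕ → Fin M → H) (y : ℕ → Fin N → H)
    (ln : ℕ → Fin K) (kn : ℕ → Fin M) (inn : ℕ → Fin N)
    (Cn Qn : ℕ → Set H)
    -- `z_n^l` solves the regularized equilibrium problem for `f_l` at `x_n`
    (hz : ∀ n l, z n l ∈ C ∧
      ∀ q ∈ C, 0 ≤ f l (z n l) q + (1 / r n) * ⟪q - z n l, z n l - x n⟫)
    -- `u_n^k = P_C(z̄_n - λ A_k z̄_n)`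
    (hu : ∀ n k, IsMetricProj C (z n (ln n) - lam • A k (z n (ln n))) (uu n k))
    -- `y_n^i = α_n ū_n + (1 - α_n) S_i ū_n`
    (hy : ∀ n i, y n i = a n • uu n (kn n) + (1 - a n) • S i (uu n (kn n)))
    -- `C_n = {v : ‖v - ȳ_n‖ ≤ ‖v - z̄_n‖ ≤ ‖v - x_n‖}`
    (hCn : ∀ n, Cn n = {v | ‖v - y n (inn n)‖ ≤ ‖v - z n (ln n)‖ ∧
      ‖v - z n (ln n)‖ ≤ ‖v - x n‖})
    -- `Q_n = {v : ⟨x_0 - x_n, x_n - v⟩ ≥ 0}`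
    (hQn : ∀ n, Qn n = {v | 0 ≤ ⟪x 0 - x n, x n - v⟫})
    -- `x_{n+1} = P_{C_n ∩ Q_n} x_0`
    (hx : ∀ n, IsMetricProj (Cn n ∩ Qn n) (x 0) (x (n + 1)))
    :
    ∀ u ∈ F, Filter.Tendsto (fun n => ‖A (kn n) (z n (ln n)) - A (kn n) u‖)
      Filter.atTop (nhds 0) := by
  subst hF
  rintro u ⟨huC, huEP, huS, huVI⟩
  have hc : 0 < lam * (2 * α - lam) := mul_pos hlam.1 (by linarith [hlam.2])
  have hzu (n : ℕ) : ‖z n (ln n) - u‖ ≤ ‖x n - u‖ :=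
    norm_sub_le_of_regularized_equilibrium (hfA2 (ln n)) (hd.trans_le (hr n)) (hz n (ln n)) huC
      (huEP (ln n))
  have hyz (n : ℕ) : lam * (2 * α - lam) * ‖A (kn n) (z n (ln n)) - A (kn n) u‖ ^ 2
      + ‖y n (inn n) - u‖ ^ 2 ≤ ‖z n (ln n) - u‖ ^ 2 := by
    have huu := (hu n (kn n)).sq_norm_sub_add_le hCcv hlam.1.le
      (hA (kn n) _ (hz n (ln n)).1 u huC)
      (IsMetricProj.sub_smul_of_forall_inner_nonneg huC hlam.1.le (huVI (kn n)))
    have hyu : ‖y n (inn n) - u‖ ≤ ‖uu n (kn n) - u‖ := by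
      rw [hy]
      refine norm_smul_add_one_sub_smul_sub_le (ha n) ?_
      simpa only [huS] using hS (inn n) _ (hu n (kn n)).1 u huC
    nlinarith [norm_nonneg (y n (inn n) - u)]
  have huCn (n : ℕ) : u ∈ Cn n := by
    have := hyz n
    rw [hCn n, Set.mem_ofPred_eq, norm_sub_rev u, norm_sub_rev u, norm_sub_rev u]
    refine ⟨(sq_le_sq₀ (norm_nonneg _) (norm_nonneg _)).mp (by nlinarith), hzu n⟩
  have hCn_convex (n : ℕ) : Convex ℝ (Cn n) := by
    rw [hCn n, Set.ofPred_and]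
    exact (convex_setOf_norm_sub_le_norm_sub _ _).inter (convex_setOf_norm_sub_le_norm_sub _ _)
  have hhybrid : IsHybridProjSeq Cn x := fun n => hQn n ▸ hx n
  refine tendsto_nhds_zero_of_mul_sq_add_sq_norm_le hc (w := fun n => x n - u)
    (v := fun n => y n (inn n) - u) (R := 2 * ‖u - x 0‖) (fun n => ?_)
    (fun n => (hyz n).trans (pow_le_pow_left₀ (norm_nonneg _) (hzu n) 2)) ?_
  · linarith [norm_sub_le_norm_sub_add_norm_sub (x n) (x 0) u, norm_sub_rev (x 0) u,
      hhybrid.norm_sub_le hCn_convex huCn n]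
  · simpa only [sub_sub_sub_cancel_right] using hhybrid.tendsto_norm_sub hCn_convex huCn
      fun n v hv => by rw [hCn n] at hv; exact hv.1.trans hv.2

theorem operator_values_converge
    {H : Type*} [NormedAddCommGroup H] [InnerProductSpace ℝ H] [CompleteSpace H]
    -- `C` is a nonempty closed convex subset of `H`
    (C : Set H) (hCne : C.Nonempty) (hCcl : IsClosed C) (hCcv : Convex ℝ C)
    (K M N : ℕ)
    -- the bifunctions `f_l : C × C → ℝ` satisfy conditions (A1)-(A4)
    (f : Fin K → H → H → ℝ)
    (hfA1 : ∀ l, ∀ p ∈ C, f l p p = 0)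
    (hfA2 : ∀ l, ∀ p ∈ C, ∀ q ∈ C, f l p q + f l q p ≤ 0)
    (hfA3 : ∀ l, ∀ p ∈ C, ∀ q ∈ C, ∀ w ∈ C,
      Filter.limsup (fun t : ℝ => f l (t • w + (1 - t) • p) q)
        (nhdsWithin 0 (Set.Ioi 0)) ≤ f l p q)
    (hfA4cv : ∀ l, ∀ p ∈ C, ConvexOn ℝ C (f l p))
    (hfA4lsc : ∀ l, ∀ p ∈ C, LowerSemicontinuousOn (f l p) C)
    -- the mappings `A_k : C → H` are `α`-inverse strongly monotone
    (α : ℝ) (hα : 0 < α) (A : Fin M → H → H)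
    (hA : ∀ k, ∀ p ∈ C, ∀ q ∈ C, α * ‖A k p - A k q‖ ^ 2 ≤ ⟪A k p - A k q, p - q⟫)
    -- the mappings `S_i : C → C` are nonexpansive
    (S : Fin N → H → H) (hSmap : ∀ i, ∀ p ∈ C, S i p ∈ C)
    (hS : ∀ i, ∀ p ∈ C, ∀ q ∈ C, ‖S i p - S i q‖ ≤ ‖p - q‖)
    -- parameters: `λ ∈ (0, 2α)`, `{α_n} ⊂ [0,1]`, `{r_n} ⊂ [d, ∞)`, `d > 0`
    (lam : ℝ) (hlam : lam ∈ Set.Ioo 0 (2 * α))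
    (a : ℕ → ℝ) (ha : ∀ n, a n ∈ Set.Icc (0 : ℝ) 1)
    (ha' : Filter.limsup a Filter.atTop < 1)
    (d : ℝ) (hd : 0 < d) (r : ℕ → ℝ) (hr : ∀ n, d ≤ r n)
    -- `F = (∩ EP(f_l)) ∩ (∩ F(S_i)) ∩ (∩ VI(A_k, C))` is nonempty
    (F : Set H)
    (hF : F = {p | p ∈ C ∧ (∀ l, ∀ q ∈ C, 0 ≤ f l p q) ∧ (∀ i, S i p = p) ∧
      (∀ k, ∀ q ∈ C, 0 ≤ ⟪A k p, q - p⟫)})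
    (hFne : F.Nonempty)
    -- the parallel hybrid algorithm
    (x : ℕ → H) (z : ℕ → Fin K → H) (uu : ℕ → Fin M → H) (y : ℕ → Fin N → H)
    (ln : ℕ → Fin K) (kn : ℕ → Fin M) (inn : ℕ → Fin N)
    (Cn Qn : ℕ → Set H)
    -- `z_n^l` solves the regularized equilibrium problem for `f_l` at `x_n`
    (hz : ∀ n l, z n l ∈ C ∧
      ∀ q ∈ C, 0 ≤ f l (z n l) q + (1 / r n) * ⟪q - z n l, z n l - x n⟫)
    -- `l_n` attains `max{‖z_n^l - x_n‖}`, `z̄_n = z_n^{l_n}`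
    (hln : ∀ n l, ‖z n l - x n‖ ≤ ‖z n (ln n) - x n‖)
    -- `u_n^k = P_C(z̄_n - λ A_k z̄_n)`
    (hu : ∀ n k, IsMetricProj C (z n (ln n) - lam • A k (z n (ln n))) (uu n k))
    -- `k_n` attains `max{‖u_n^k - x_n‖}`, `ū_n = u_n^{k_n}`
    (hkn : ∀ n k, ‖uu n k - x n‖ ≤ ‖uu n (kn n) - x n‖)
    -- `y_n^i = α_n ū_n + (1 - α_n) S_i ū_n`
    (hy : ∀ n i, y n i = a n • uu n (kn n) + (1 - a n) • S i (uu n (kn n)))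
    -- `i_n` attains `max{‖y_n^i - x_n‖}`, `ȳ_n = y_n^{i_n}`
    (hin : ∀ n i, ‖y n i - x n‖ ≤ ‖y n (inn n) - x n‖)
    -- `C_n = {v : ‖v - ȳ_n‖ ≤ ‖v - z̄_n‖ ≤ ‖v - x_n‖}`
    (hCn : ∀ n, Cn n = {v | ‖v - y n (inn n)‖ ≤ ‖v - z n (ln n)‖ ∧
      ‖v - z n (ln n)‖ ≤ ‖v - x n‖})
    -- `Q_n = {v : ⟨x_0 - x_n, x_n - v⟩ ≥ 0}`
    (hQn : ∀ n, Qn n = {v | 0 ≤ ⟪x 0 - x n, x n - v⟫})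
    -- `x_{n+1} = P_{C_n ∩ Q_n} x_0`
    (hx : ∀ n, IsMetricProj (Cn n ∩ Qn n) (x 0) (x (n + 1)))
    :
    ∀ u ∈ F, Filter.Tendsto (fun n => ‖A (kn n) (z n (ln n)) - A (kn n) u‖)
      Filter.atTop (nhds 0) :=
  operator_values_converge_general C hCcv K M N f hfA2 α A hA S hS lam hlam a ha d hd r hr F hF x z
    uu y ln kn inn Cn Qn hz hu hy hCn hQn hx
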